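/- If the feasible set S of the root problem is nonempty and S = ⋃ᵢ Sᵢ is a finite cover by subproblem feasible sets, then the union of the Pareto fronts of the subproblems, after removing dominated elements, equals the Pareto front of the root problem, provided each subproblem's Pareto front is computed exactly. -/

import Mathlib

/-!
Pareto points are the minimal elements of the image under the componentwise order, so this is
an order-theoretic fact about a union `A = ⋃ i, A i` of partially well-ordered (here: finite)
sets. A point of `A` lying above some `y ∈ A j` also lies above a minimal element of `A j`, so
comparing only against the local fronts loses nothing, and a minimal point of `A` is minimal in
every `A i` containing it.
-/

/-- `u` strictly dominates `v` (for minimization): `u ≤ v` componentwise and `u ≠ v`. -/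
def Dominates {p : ℕ} (u v : Fin p → ℝ) : Prop := (∀ k, u k ≤ v k) ∧ u ≠ v

/-- The Pareto front of the feasible set `T` under objective `f`. -/
def ParetoFront {α : Type*} {p : ℕ} (f : α → Fin p → ℝ) (T : Set α) : Set (Fin p → ℝ) :=
  {v | (∃ x ∈ T, f x = v) ∧ ¬∃ x ∈ T, Dominates (f x) v}

lemma dominates_iff_lt {p : ℕ} (u v : Fin p → ℝ) : Dominates u v ↔ u < v := by
  rw [lt_iff_le_and_ne]
  exact and_congr (by simp [Pi.le_def]) Iff.rfl

lemma setOf_not_dominated_eq_setOf_minimal {p : ℕ} (A : Set (Fin p → ℝ)) :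
    {v ∈ A | ¬∃ u ∈ A, Dominates u v} = {v | Minimal (· ∈ A) v} := by
  ext v
  simp only [Set.mem_ofPred_eq, minimal_iff_forall_lt, not_exists, not_and]
  exact and_congr Iff.rfl ⟨fun h u hu huA => h u huA ((dominates_iff_lt u v).2 hu),
    fun h u huA hu => h ((dominates_iff_lt u v).1 hu) huA⟩

lemma paretoFront_eq_setOf_minimal {α : Type*} {p : ℕ} (f : α → Fin p → ℝ) (T : Set α) :
    ParetoFront f T = {v | Minimal (· ∈ f '' T) v} := by
  rw [← setOf_not_dominated_eq_setOf_minimal]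
  ext v
  simp [ParetoFront]

lemma setOf_minimal_iUnion_setOf_minimal {β ι : Type*} [Preorder β] (A : ι → Set β)
    (hA : ∀ i, (A i).IsPWO) :
    {v | Minimal (· ∈ ⋃ i, {m | Minimal (· ∈ A i) m}) v} = {v | Minimal (· ∈ ⋃ i, A i) v} := by
  ext v
  constructor
  · intro hv
    obtain ⟨i, hvi⟩ := Set.mem_iUnion.1 hv.prop
    refine ⟨Set.mem_iUnion.2 ⟨i, hvi.prop⟩, fun y hy hyv => ?_⟩
    obtain ⟨j, hyj⟩ := Set.mem_iUnion.1 hy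
    obtain ⟨m, hmy, hm⟩ := (hA j).exists_le_minimal hyj
    exact (hv.le_of_le (Set.mem_iUnion.2 ⟨j, hm⟩) (hmy.trans hyv)).trans hmy
  · intro hv
    obtain ⟨i, hvi⟩ := Set.mem_iUnion.1 hv.prop
    have hv_i : Minimal (· ∈ A i) v := hv.mono (fun y hy => Set.mem_iUnion.2 ⟨i, hy⟩) hvi
    refine ⟨Set.mem_iUnion.2 ⟨i, hv_i⟩, fun y hy hyv => ?_⟩
    obtain ⟨j, hyj⟩ := Set.mem_iUnion.1 hy
    exact hv.le_of_le (Set.mem_iUnion.2 ⟨j, hyj.prop⟩) hyv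

theorem stmt_15_general {α : Type*} {p : ℕ} (f : α → Fin p → ℝ)
    {ι : Type*} (S : Set α) (Si : ι → Set α)
    (hcover : S = ⋃ i, Si i)
    (hfin : (f '' S).Finite) :
    {v ∈ ⋃ i, ParetoFront f (Si i) |
      ¬∃ u ∈ ⋃ i, ParetoFront f (Si i), Dominates u v} = ParetoFront f S := by
  have hfin_i : ∀ i, (f '' Si i).Finite := fun i =>
    hfin.subset (Set.image_mono (hcover ▸ Set.subset_iUnion Si i))
  simp only [setOf_not_dominated_eq_setOf_minimal, paretoFront_eq_setOf_minimal, hcover,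
    Set.image_iUnion]
  exact setOf_minimal_iUnion_setOf_minimal _ fun i => (hfin_i i).isPWO

theorem stmt_15 {α : Type*} {p : ℕ} (f : α → Fin p → ℝ)
    {ι : Type*} [Finite ι] (S : Set α) (Si : ι → Set α)
    (hS : S.Nonempty) (hcover : S = ⋃ i, Si i)
    (hfin : (f '' S).Finite) :
    {v ∈ ⋃ i, ParetoFront f (Si i) |
      ¬∃ u ∈ ⋃ i, ParetoFront f (Si i), Dominates u v} = ParetoFront f S :=
  stmt_15_general f S Si hcover hfin
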